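/- arXiv:2604.20529 — 8 statements merged into one kernel-verified Lean document; each statement's English description precedes it below -/
import Mathlib

section
/- Let F be a family of s-element subsets of [n] with 2 ≤ k, k+2 ≤ s < n, such that any two distinct members A, B of F satisfy 1 ≤ |A ∩ B| ≤ k. If n ≥ s^(5/2), then |F| ≤ C(n-1, k) / C(s-1, k). -/
open Finset

lemma key_count (n s k t : ℕ) (F : Finset (Finset ℕ))
    (hF : ∀ A ∈ F, A ⊆ Finset.Icc 1 n ∧ A.card = s)
    (hub : ∀ A ∈ F, ∀ B ∈ F, A ≠ B → (A ∩ B).card ≤ k)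
    (T : Finset ℕ) (hT : T.card = t) (htk : t ≤ k + 1)
    (hTA : ∀ A ∈ F, T ⊆ A) :
    F.card * Nat.choose (s - t) (k + 1 - t) ≤ Nat.choose (n - t) (k + 1 - t) := by
  rcases F.eq_empty_or_nonempty with rfl | ⟨A₀, hA₀⟩
  · simp
  have hTn : T ⊆ Finset.Icc 1 n := (hTA A₀ hA₀).trans (hF A₀ hA₀).1
  have hcards : ∀ A ∈ F, ((A \ T).powersetCard (k+1-t)).card = Nat.choose (s-t) (k+1-t) := by
    intro A hA
    rw [Finset.card_powersetCard, Finset.card_sdiff_of_subset (hTA A hA), (hF A hA).2, hT]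
  have hdisj : ∀ A ∈ F, ∀ B ∈ F, A ≠ B →
      Disjoint ((A \ T).powersetCard (k+1-t)) ((B \ T).powersetCard (k+1-t)) := by
    intro A hA B hB hAB
    rw [Finset.disjoint_left]
    intro K hKA hKB
    rw [Finset.mem_powersetCard] at hKA hKB
    have hKT : Disjoint K T := Finset.disjoint_of_subset_left hKA.1 Finset.sdiff_disjoint
    have hsub : K ∪ T ⊆ A ∩ B := by
      intro z hz
      rcases Finset.mem_union.mp hz with h | h
      · exact Finset.mem_inter.mpr ⟨(Finset.sdiff_subset) (hKA.1 h), (Finset.sdiff_subset) (hKB.1 h)⟩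
      · exact Finset.mem_inter.mpr ⟨hTA A hA h, hTA B hB h⟩
    have hcard : (K ∪ T).card = k + 1 := by
      rw [Finset.card_union_of_disjoint hKT, hKA.2, hT]; omega
    have h1 := Finset.card_le_card hsub
    have h2 := hub A hA B hB hAB
    omega
  calc F.card * Nat.choose (s-t) (k+1-t)
      = ∑ A ∈ F, ((A \ T).powersetCard (k+1-t)).card := by
        rw [Finset.sum_congr rfl hcards, Finset.sum_const, smul_eq_mul]
    _ = (F.biUnion fun A => (A \ T).powersetCard (k+1-t)).card :=
        (Finset.card_biUnion hdisj).symm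
    _ ≤ ((Finset.Icc 1 n \ T).powersetCard (k+1-t)).card := by
        apply Finset.card_le_card
        intro K hK
        rw [Finset.mem_biUnion] at hK
        obtain ⟨A, hA, hKA⟩ := hK
        rw [Finset.mem_powersetCard] at hKA ⊢
        exact ⟨hKA.1.trans (Finset.sdiff_subset_sdiff (hF A hA).1 le_rfl), hKA.2⟩
    _ = Nat.choose (n - t) (k+1-t) := by
        rw [Finset.card_powersetCard, Finset.card_sdiff_of_subset hTn, Nat.card_Icc, hT]
        congr 1

lemma choose_id (m j : ℕ) (hm : 1 ≤ m) (hj : 1 ≤ j) :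
    m * Nat.choose (m-1) (j-1) = Nat.choose m j * j := by
  obtain ⟨m', rfl⟩ : ∃ m', m = m' + 1 := ⟨m-1, by omega⟩
  obtain ⟨j', rfl⟩ : ∃ j', j = j' + 1 := ⟨j-1, by omega⟩
  simpa using Nat.add_one_mul_choose_eq m' j'

lemma arith_n2s2 (n s : ℕ) (hs : 4 ≤ s) (hn : s ^ 5 ≤ n ^ 2) : 2 * s * s ≤ n := by
  by_contra h
  push_neg at h
  have h1 : (n+1)*(n+1) ≤ (2*s*s)*(2*s*s) := Nat.mul_le_mul (by omega) (by omega)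
  have h2 : 4*(s*s*s*s) ≤ s^5 := by nlinarith [hs]
  nlinarith [hn, h1, h2]

lemma arith3 (n s : ℕ) (hs : 4 ≤ s) (hsn : s < n) (hn : s ^ 5 ≤ n ^ 2) :
    s * s * s * (s - 1) * (s - 2) ≤ (n - 1) * (n - 2) := by
  zify [show 1 ≤ s by omega, show 2 ≤ s by omega, show 1 ≤ n by omega, show 2 ≤ n by omega]
  have hs' : (4:ℤ) ≤ s := by exact_mod_cast hs
  have hsn' : (s:ℤ) < n := by exact_mod_cast hsn
  have hn' : (s:ℤ)^5 ≤ (n:ℤ)^2 := by exact_mod_cast hn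
  have e1 : ((n:ℤ)-1)*((n:ℤ)-2) = (n:ℤ)^2 - 3*n + 2 := by ring
  have e2 : (s:ℤ)*s*s*((s:ℤ)-1)*((s:ℤ)-2) = (s:ℤ)^5 - 3*(s:ℤ)^4 + 2*(s:ℤ)^3 := by ring
  rw [e1, e2]
  have hc : (1:ℤ) ≤ (s:ℤ)^3 := by nlinarith [hs']
  rcases le_or_gt ((s:ℤ)^4 - (s:ℤ)^3) ((n:ℤ)-1) with h | h
  · have h2 : (s:ℤ) - 2 ≤ (n:ℤ) - 2 := by linarith
    have hb : (s:ℤ)*s*s*((s:ℤ)-1) ≤ (n:ℤ)-1 := by nlinarith [h]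
    have := mul_le_mul hb h2 (by linarith : (0:ℤ) ≤ (s:ℤ)-2) (by nlinarith : (0:ℤ) ≤ (n:ℤ)-1)
    nlinarith [this]
  · nlinarith [hn', h, hc]

theorem stmt_0 (n s k : ℕ) (hk : 2 ≤ k) (hs : k + 2 ≤ s) (hsn : s < n)
    (hn : s ^ 5 ≤ n ^ 2)
    (F : Finset (Finset ℕ))
    (hF : ∀ A ∈ F, A ⊆ Finset.Icc 1 n ∧ A.card = s)
    (hint : ∀ A ∈ F, ∀ B ∈ F, A ≠ B → 1 ≤ (A ∩ B).card ∧ (A ∩ B).card ≤ k) :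
    F.card * Nat.choose (s - 1) k ≤ Nat.choose (n - 1) k := by
  have hs4 : 4 ≤ s := by omega
  have hub : ∀ A ∈ F, ∀ B ∈ F, A ≠ B → (A ∩ B).card ≤ k :=
    fun A hA B hB hne => (hint A hA B hB hne).2
  -- helper: every distinct pair of members meets
  have hmeet : ∀ C ∈ F, ∀ E ∈ F, C ≠ E → ∃ b, b ∈ C ∧ b ∈ E := by
    intro C hC E hE hne
    have h1 := (hint C hC E hE hne).1
    obtain ⟨b, hb⟩ := Finset.card_pos.mp (show 0 < (C ∩ E).card by omega)
    exact ⟨b, Finset.mem_inter.mp hb⟩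
  by_cases hstar : ∃ x, ∀ A ∈ F, x ∈ A
  · -- star case: direct application of key_count with T = {x}
    obtain ⟨x, hx⟩ := hstar
    have := key_count n s k 1 F hF hub {x} (by simp) (by omega)
      (fun A hA => Finset.singleton_subset_iff.mpr (hx A hA))
    simpa using this
  push_neg at hstar
  by_cases hpair : ∃ x y, ∀ A ∈ F, x ∈ A ∨ y ∈ A
  · -- covering pair case
    obtain ⟨x, y, hxy⟩ := hpair
    obtain ⟨E, hE, hxE⟩ := hstar x
    obtain ⟨E', hE', hyE'⟩ := hstar y
    have hxE' : x ∈ E' := (hxy E' hE').resolve_right hyE'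
    set F1 := F.filter (fun C => x ∈ C) with hF1
    set F2 := F.filter (fun C => x ∉ C) with hF2
    have hsplit : F.card = F1.card + F2.card := (Finset.card_filter_add_card_filter_not (fun C => x ∈ C)).symm
    -- bound F1
    have hb1 : F1.card * Nat.choose (s-2) (k-1) ≤ s * Nat.choose (n-2) (k-1) := by
      have hsub : F1 ⊆ E.biUnion (fun b => F.filter (fun C => insert x {b} ⊆ C)) := by
        intro C hC
        rw [hF1, Finset.mem_filter] at hC
        obtain ⟨hCF, hxC⟩ := hC
        have hne : C ≠ E := fun h => hxE (h ▸ hxC)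
        obtain ⟨b, hbC, hbE⟩ := hmeet C hCF E hE hne
        rw [Finset.mem_biUnion]
        exact ⟨b, hbE, Finset.mem_filter.mpr ⟨hCF, by
          rw [Finset.insert_subset_iff, Finset.singleton_subset_iff]; exact ⟨hxC, hbC⟩⟩⟩
      calc F1.card * Nat.choose (s-2) (k-1)
          ≤ (∑ b ∈ E, (F.filter (fun C => insert x {b} ⊆ C)).card) * Nat.choose (s-2) (k-1) := by
            apply Nat.mul_le_mul_right
            exact (Finset.card_le_card hsub).trans (Finset.card_biUnion_le)
        _ = ∑ b ∈ E, (F.filter (fun C => insert x {b} ⊆ C)).card * Nat.choose (s-2) (k-1) := by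
            rw [Finset.sum_mul]
        _ ≤ ∑ b ∈ E, Nat.choose (n-2) (k-1) := by
            apply Finset.sum_le_sum
            intro b hbE
            have hbx : b ≠ x := fun h => hxE (h ▸ hbE)
            have hT : (insert x {b} : Finset ℕ).card = 2 := by
              rw [Finset.card_insert_of_notMem (by simp [hbx.symm]), Finset.card_singleton]
            have := key_count n s k 2 (F.filter (fun C => insert x {b} ⊆ C))
              (fun A hA => hF A (Finset.mem_filter.mp hA).1)
              (fun A hA B hB hne => hub A (Finset.mem_filter.mp hA).1 B (Finset.mem_filter.mp hB).1 hne)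
              (insert x {b}) hT (by omega)
              (fun A hA => (Finset.mem_filter.mp hA).2)
            have hkk : k + 1 - 2 = k - 1 := by omega
            rwa [hkk] at this
        _ = s * Nat.choose (n-2) (k-1) := by
            rw [Finset.sum_const, smul_eq_mul, (hF E hE).2]
    -- bound F2
    have hb2 : F2.card * Nat.choose (s-2) (k-1) ≤ s * Nat.choose (n-2) (k-1) := by
      have hsub : F2 ⊆ E'.biUnion (fun b => F.filter (fun C => insert y {b} ⊆ C)) := by
        intro C hC
        rw [hF2, Finset.mem_filter] at hC
        obtain ⟨hCF, hxC⟩ := hC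
        have hyC : y ∈ C := (hxy C hCF).resolve_left hxC
        have hne : C ≠ E' := fun h => hxC (h ▸ hxE')
        obtain ⟨b, hbC, hbE⟩ := hmeet C hCF E' hE' hne
        rw [Finset.mem_biUnion]
        exact ⟨b, hbE, Finset.mem_filter.mpr ⟨hCF, by
          rw [Finset.insert_subset_iff, Finset.singleton_subset_iff]; exact ⟨hyC, hbC⟩⟩⟩
      calc F2.card * Nat.choose (s-2) (k-1)
          ≤ (∑ b ∈ E', (F.filter (fun C => insert y {b} ⊆ C)).card) * Nat.choose (s-2) (k-1) := by
            apply Nat.mul_le_mul_right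
            exact (Finset.card_le_card hsub).trans (Finset.card_biUnion_le)
        _ = ∑ b ∈ E', (F.filter (fun C => insert y {b} ⊆ C)).card * Nat.choose (s-2) (k-1) := by
            rw [Finset.sum_mul]
        _ ≤ ∑ b ∈ E', Nat.choose (n-2) (k-1) := by
            apply Finset.sum_le_sum
            intro b hbE
            have hby : b ≠ y := fun h => hyE' (h ▸ hbE)
            have hT : (insert y {b} : Finset ℕ).card = 2 := by
              rw [Finset.card_insert_of_notMem (by simp [hby.symm]), Finset.card_singleton]
            have := key_count n s k 2 (F.filter (fun C => insert y {b} ⊆ C))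
              (fun A hA => hF A (Finset.mem_filter.mp hA).1)
              (fun A hA B hB hne => hub A (Finset.mem_filter.mp hA).1 B (Finset.mem_filter.mp hB).1 hne)
              (insert y {b}) hT (by omega)
              (fun A hA => (Finset.mem_filter.mp hA).2)
            have hkk : k + 1 - 2 = k - 1 := by omega
            rwa [hkk] at this
        _ = s * Nat.choose (n-2) (k-1) := by
            rw [Finset.sum_const, smul_eq_mul, (hF E' hE').2]
    have htot : F.card * Nat.choose (s-2) (k-1) ≤ 2 * s * Nat.choose (n-2) (k-1) := by
      rw [hsplit, Nat.add_mul]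
      calc F1.card * Nat.choose (s-2) (k-1) + F2.card * Nat.choose (s-2) (k-1)
          ≤ s * Nat.choose (n-2) (k-1) + s * Nat.choose (n-2) (k-1) := Nat.add_le_add hb1 hb2
        _ = 2 * s * Nat.choose (n-2) (k-1) := by ring
    -- arithmetic transfer
    have h2s : 2 * s * (s - 1) ≤ n - 1 := by
      have := arith_n2s2 n s hs4 hn
      have h1 : 1 ≤ s := by omega
      zify [h1, show 1 ≤ n by omega]
      nlinarith [this]
    have ids : (s-1) * Nat.choose (s-1-1) (k-1) = Nat.choose (s-1) k * k :=
      choose_id (s-1) k (by omega) (by omega)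
    have idn : (n-1) * Nat.choose (n-1-1) (k-1) = Nat.choose (n-1) k * k :=
      choose_id (n-1) k (by omega) (by omega)
    have hss : s - 1 - 1 = s - 2 := by omega
    have hnn : n - 1 - 1 = n - 2 := by omega
    rw [hss] at ids
    rw [hnn] at idn
    have hkpos : 0 < k := by omega
    apply Nat.le_of_mul_le_mul_right _ hkpos
    calc F.card * Nat.choose (s-1) k * k
        = (s-1) * (F.card * Nat.choose (s-2) (k-1)) := by
          rw [Nat.mul_assoc, ← ids]; ring
      _ ≤ (s-1) * (2 * s * Nat.choose (n-2) (k-1)) := Nat.mul_le_mul_left _ htot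
      _ = (2 * s * (s-1)) * Nat.choose (n-2) (k-1) := by ring
      _ ≤ (n-1) * Nat.choose (n-2) (k-1) := Nat.mul_le_mul_right _ h2s
      _ = Nat.choose (n-1) k * k := idn
  · -- no covering pair, non-star case
    push_neg at hpair
    rcases F.eq_empty_or_nonempty with rfl | ⟨A₀, hA₀⟩
    · simp
    choose D hDF hDx using hstar
    have hpair' : ∀ x b, ∃ A ∈ F, x ∉ A ∧ b ∉ A := by
      intro x b
      obtain ⟨A, hA, hnot⟩ := hpair x b
      exact ⟨A, hA, by tauto⟩
    choose E hEF hEx hEb using hpair'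
    have hsub : F ⊆ A₀.biUnion (fun x => (D x).biUnion (fun b => (E x b).biUnion
        (fun c => F.filter (fun C => insert x (insert b {c}) ⊆ C)))) := by
      intro C hC
      -- x in C ∩ A₀
      obtain ⟨x, hxC, hxA⟩ : ∃ x, x ∈ C ∧ x ∈ A₀ := by
        rcases eq_or_ne C A₀ with rfl | hne
        · obtain ⟨x, hx⟩ := Finset.card_pos.mp (by rw [(hF C hC).2]; omega)
          exact ⟨x, hx, hx⟩
        · exact hmeet C hC A₀ hA₀ hne
      have hCD : C ≠ D x := fun h => hDx x (h ▸ hxC)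
      obtain ⟨b, hbC, hbD⟩ := hmeet C hC (D x) (hDF x) hCD
      have hCE : C ≠ E x b := fun h => hEx x b (h ▸ hxC)
      obtain ⟨c, hcC, hcE⟩ := hmeet C hC (E x b) (hEF x b) hCE
      rw [Finset.mem_biUnion]
      refine ⟨x, hxA, ?_⟩
      rw [Finset.mem_biUnion]
      refine ⟨b, hbD, ?_⟩
      rw [Finset.mem_biUnion]
      refine ⟨c, hcE, Finset.mem_filter.mpr ⟨hC, ?_⟩⟩
      rw [Finset.insert_subset_iff, Finset.insert_subset_iff, Finset.singleton_subset_iff]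
      exact ⟨hxC, hbC, hcC⟩
    have hcA₀ : A₀.card = s := (hF A₀ hA₀).2
    have htriple : F.card * Nat.choose (s-3) (k-2) ≤ s * s * s * Nat.choose (n-3) (k-2) := by
      calc F.card * Nat.choose (s-3) (k-2)
          ≤ (∑ x ∈ A₀, ∑ b ∈ D x, ∑ c ∈ E x b,
              (F.filter (fun C => insert x (insert b {c}) ⊆ C)).card) * Nat.choose (s-3) (k-2) := by
            apply Nat.mul_le_mul_right
            refine (Finset.card_le_card hsub).trans ?_
            refine Finset.card_biUnion_le.trans (Finset.sum_le_sum fun x _ => ?_)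
            refine Finset.card_biUnion_le.trans (Finset.sum_le_sum fun b _ => ?_)
            exact Finset.card_biUnion_le
        _ = ∑ x ∈ A₀, ∑ b ∈ D x, ∑ c ∈ E x b,
              (F.filter (fun C => insert x (insert b {c}) ⊆ C)).card * Nat.choose (s-3) (k-2) := by
            simp [Finset.sum_mul]
        _ ≤ ∑ x ∈ A₀, ∑ b ∈ D x, ∑ c ∈ E x b, Nat.choose (n-3) (k-2) := by
            refine Finset.sum_le_sum fun x _ => Finset.sum_le_sum fun b hb => Finset.sum_le_sum fun c hc => ?_
            have hbx : b ≠ x := fun h => hDx x (h ▸ hb)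
            have hcx : c ≠ x := fun h => hEx x b (h ▸ hc)
            have hcb : c ≠ b := fun h => hEb x b (h ▸ hc)
            have hT : (insert x (insert b {c}) : Finset ℕ).card = 3 := by
              rw [Finset.card_insert_of_notMem (by simp [hbx.symm, hcx.symm]),
                  Finset.card_insert_of_notMem (by simp [hcb.symm]), Finset.card_singleton]
            have := key_count n s k 3 (F.filter (fun C => insert x (insert b {c}) ⊆ C))
              (fun A hA => hF A (Finset.mem_filter.mp hA).1)
              (fun A hA B hB hne => hub A (Finset.mem_filter.mp hA).1 B (Finset.mem_filter.mp hB).1 hne)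
              (insert x (insert b {c})) hT (by omega)
              (fun A hA => (Finset.mem_filter.mp hA).2)
            have hkk : k + 1 - 3 = k - 2 := by omega
            rwa [hkk] at this
        _ = s * s * s * Nat.choose (n-3) (k-2) := by
            have hDs : ∀ x, (D x).card = s := fun x => (hF (D x) (hDF x)).2
            have hEs : ∀ x b, (E x b).card = s := fun x b => (hF (E x b) (hEF x b)).2
            simp only [Finset.sum_const, smul_eq_mul]
            rw [Finset.sum_congr rfl (fun x _ => Finset.sum_congr rfl (fun b _ => by rw [hEs x b]))]
            rw [Finset.sum_congr rfl (fun x _ => by rw [Finset.sum_const, smul_eq_mul, hDs x])]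
            rw [Finset.sum_const, smul_eq_mul, hcA₀]
            ring
    -- arithmetic transfer with two steps
    have h3 := arith3 n s hs4 hsn hn
    have ids1 : (s-1) * Nat.choose (s-2) (k-1) = Nat.choose (s-1) k * k := by
      have := choose_id (s-1) k (by omega) (by omega)
      rwa [show s-1-1 = s-2 by omega] at this
    have ids2 : (s-2) * Nat.choose (s-3) (k-2) = Nat.choose (s-2) (k-1) * (k-1) := by
      have := choose_id (s-2) (k-1) (by omega) (by omega)
      rwa [show s-2-1 = s-3 by omega, show k-1-1 = k-2 by omega] at this
    have idn1 : (n-1) * Nat.choose (n-2) (k-1) = Nat.choose (n-1) k * k := by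
      have := choose_id (n-1) k (by omega) (by omega)
      rwa [show n-1-1 = n-2 by omega] at this
    have idn2 : (n-2) * Nat.choose (n-3) (k-2) = Nat.choose (n-2) (k-1) * (k-1) := by
      have := choose_id (n-2) (k-1) (by omega) (by omega)
      rwa [show n-2-1 = n-3 by omega, show k-1-1 = k-2 by omega] at this
    have hkpos : 0 < k * (k-1) := by
      have : 0 < k := by omega
      have : 0 < k - 1 := by omega
      positivity
    have hS : Nat.choose (s-1) k * (k * (k-1)) = (s-1) * ((s-2) * Nat.choose (s-3) (k-2)) := by
      calc Nat.choose (s-1) k * (k * (k-1)) = (Nat.choose (s-1) k * k) * (k-1) := by ring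
        _ = ((s-1) * Nat.choose (s-2) (k-1)) * (k-1) := by rw [ids1]
        _ = (s-1) * (Nat.choose (s-2) (k-1) * (k-1)) := by ring
        _ = (s-1) * ((s-2) * Nat.choose (s-3) (k-2)) := by rw [ids2]
    have hN : Nat.choose (n-1) k * (k * (k-1)) = (n-1) * ((n-2) * Nat.choose (n-3) (k-2)) := by
      calc Nat.choose (n-1) k * (k * (k-1)) = (Nat.choose (n-1) k * k) * (k-1) := by ring
        _ = ((n-1) * Nat.choose (n-2) (k-1)) * (k-1) := by rw [idn1]
        _ = (n-1) * (Nat.choose (n-2) (k-1) * (k-1)) := by ring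
        _ = (n-1) * ((n-2) * Nat.choose (n-3) (k-2)) := by rw [idn2]
    apply Nat.le_of_mul_le_mul_right _ hkpos
    calc F.card * Nat.choose (s-1) k * (k * (k-1))
        = (s-1) * (s-2) * (F.card * Nat.choose (s-3) (k-2)) := by
          rw [Nat.mul_assoc, hS]; ring
      _ ≤ (s-1) * (s-2) * (s * s * s * Nat.choose (n-3) (k-2)) := Nat.mul_le_mul_left _ htriple
      _ = (s * s * s * (s-1) * (s-2)) * Nat.choose (n-3) (k-2) := by ring
      _ ≤ ((n-1) * (n-2)) * Nat.choose (n-3) (k-2) := Nat.mul_le_mul_right _ h3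
      _ = Nat.choose (n-1) k * (k * (k-1)) := by
          rw [hN]; ring
end

section
/- Let 2 ≤ k and k+2 ≤ s ≤ n. If F is a family of s-element subsets of [n] such that every member of F contains a fixed element x ∈ [n], and any two distinct members A, B of F satisfy |A ∩ B| ≤ k, then |F| * C(s-1, k) ≤ C(n-1, k). -/
open Finset

theorem stmt_1 (n s k : ℕ) (hk : 2 ≤ k) (hs : k + 2 ≤ s) (hsn : s ≤ n)
    (x : ℕ) (hx : x ∈ Finset.Icc 1 n)
    (F : Finset (Finset ℕ))
    (hF : ∀ A ∈ F, A ⊆ Finset.Icc 1 n ∧ A.card = s ∧ x ∈ A)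
    (hint : ∀ A ∈ F, ∀ B ∈ F, A ≠ B → (A ∩ B).card ≤ k) :
    F.card * Nat.choose (s - 1) k ≤ Nat.choose (n - 1) k := by
  classical
  have hdisj : ∀ A ∈ F, ∀ B ∈ F, A ≠ B →
      Disjoint ((A.erase x).powersetCard k) ((B.erase x).powersetCard k) := by
    intro A hA B hB hAB
    rw [Finset.disjoint_left]
    intro K hKA hKB
    rw [Finset.mem_powersetCard] at hKA hKB
    have hxK : x ∉ K := fun h => (Finset.mem_erase.mp (hKA.1 h)).1 rfl
    have hsub : insert x K ⊆ A ∩ B := by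
      intro y hy
      rcases Finset.mem_insert.mp hy with rfl | hy
      · exact Finset.mem_inter.mpr ⟨(hF A hA).2.2, (hF B hB).2.2⟩
      · exact Finset.mem_inter.mpr ⟨Finset.mem_of_mem_erase (hKA.1 hy),
          Finset.mem_of_mem_erase (hKB.1 hy)⟩
    have := Finset.card_le_card hsub
    rw [Finset.card_insert_of_notMem hxK, hKA.2] at this
    exact absurd (le_trans this (hint A hA B hB hAB)) (by omega)
  have hcard : (F.biUnion (fun A => (A.erase x).powersetCard k)).card
      = F.card * Nat.choose (s - 1) k := by
    rw [Finset.card_biUnion hdisj]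
    rw [Finset.sum_congr rfl (fun A hA => ?_), Finset.sum_const, smul_eq_mul]
    rw [Finset.card_powersetCard, Finset.card_erase_of_mem (hF A hA).2.2, (hF A hA).2.1]
  rw [← hcard]
  have hsub : F.biUnion (fun A => (A.erase x).powersetCard k)
      ⊆ ((Finset.Icc 1 n).erase x).powersetCard k := by
    intro K hK
    rw [Finset.mem_biUnion] at hK
    obtain ⟨A, hA, hKA⟩ := hK
    rw [Finset.mem_powersetCard] at hKA ⊢
    exact ⟨fun y hy => Finset.mem_erase.mpr ⟨(Finset.mem_erase.mp (hKA.1 hy)).1,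
      (hF A hA).1 (Finset.mem_of_mem_erase (hKA.1 hy))⟩, hKA.2⟩
  calc _ ≤ (((Finset.Icc 1 n).erase x).powersetCard k).card := Finset.card_le_card hsub
    _ = Nat.choose (n - 1) k := by
        rw [Finset.card_powersetCard, Finset.card_erase_of_mem hx, Nat.card_Icc]
        congr 1
end

section
/- Let s ≥ 3 and let F be an intersecting family of s-element subsets of [n] such that for every pair of elements u, v ∈ [n] there is a member F ∈ F with F ∩ {u, v} = ∅. Then there exists a family T of 3-element subsets of [n] with |T| ≤ s^3 such that every member of F contains at least one member of T. -/
open Finset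

theorem stmt_2 (n s : ℕ) (hs : 3 ≤ s)
    (F : Finset (Finset ℕ))
    (hF : ∀ A ∈ F, A ⊆ Finset.Icc 1 n ∧ A.card = s)
    (hint : ∀ A ∈ F, ∀ B ∈ F, (A ∩ B).Nonempty)
    (hcov : ∀ u ∈ Finset.Icc 1 n, ∀ v ∈ Finset.Icc 1 n,
      ∃ G ∈ F, G ∩ ({u, v} : Finset ℕ) = ∅) :
    ∃ T : Finset (Finset ℕ),
      (∀ t ∈ T, t ⊆ Finset.Icc 1 n ∧ t.card = 3) ∧
      T.card ≤ s ^ 3 ∧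
      ∀ A ∈ F, ∃ t ∈ T, t ⊆ A := by
  rcases F.eq_empty_or_nonempty with hFe | ⟨F1, hF1⟩
  · exact ⟨∅, by simp, by simp, by simp [hFe]⟩
  · have hchoice : ∀ x y : ℕ, ∃ G, G ∈ F ∧
        (x ∈ Finset.Icc 1 n → y ∈ Finset.Icc 1 n → x ∉ G ∧ y ∉ G) := by
      intro x y
      by_cases hx : x ∈ Finset.Icc 1 n
      · by_cases hy : y ∈ Finset.Icc 1 n
        · obtain ⟨G, hG, hGd⟩ := hcov x hx y hy
          refine ⟨G, hG, fun _ _ => ⟨fun h => ?_, fun h => ?_⟩⟩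
          · have : x ∈ G ∩ ({x, y} : Finset ℕ) := by simp [h]
            simp [hGd] at this
          · have : y ∈ G ∩ ({x, y} : Finset ℕ) := by simp [h]
            simp [hGd] at this
        · exact ⟨F1, hF1, fun _ hy' => absurd hy' hy⟩
      · exact ⟨F1, hF1, fun hx' => absurd hx' hx⟩
    choose G hGF hGd using hchoice
    -- F2 x := G x x, F3 x y := G x y
    set T : Finset (Finset ℕ) :=
      F1.biUnion (fun x => (G x x).biUnion (fun y => (G x y).image (fun z => ({x, y, z} : Finset ℕ)))) with hT
    have hmemT : ∀ t ∈ T, ∃ x ∈ F1, ∃ y ∈ G x x, ∃ z ∈ G x y, t = {x, y, z} := by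
      intro t ht
      simp only [hT, mem_biUnion, mem_image] at ht
      obtain ⟨x, hx, y, hy, z, hz, rfl⟩ := ht
      exact ⟨x, hx, y, hy, z, hz, rfl⟩
    refine ⟨T, ?_, ?_, ?_⟩
    · intro t ht
      obtain ⟨x, hx, y, hy, z, hz, rfl⟩ := hmemT t ht
      have hxI : x ∈ Finset.Icc 1 n := (hF F1 hF1).1 hx
      have hyI : y ∈ Finset.Icc 1 n := (hF _ (hGF x x)).1 hy
      have hzI : z ∈ Finset.Icc 1 n := (hF _ (hGF x y)).1 hz
      have hxy : y ≠ x := fun h => (hGd x x hxI hxI).1 (h ▸ hy)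
      have hzx : z ≠ x := fun h => (hGd x y hxI hyI).1 (h ▸ hz)
      have hzy : z ≠ y := fun h => (hGd x y hxI hyI).2 (h ▸ hz)
      constructor
      · intro w hw
        simp only [mem_insert, mem_singleton] at hw
        rcases hw with rfl | rfl | rfl <;> assumption
      · rw [card_insert_of_notMem (by simp [Ne.symm hxy, Ne.symm hzx]),
          card_insert_of_notMem (by simp [Ne.symm hzy]), card_singleton]
    · calc T.card ≤ ∑ x ∈ F1, ((G x x).biUnion (fun y => (G x y).image (fun z => ({x, y, z} : Finset ℕ)))).card :=
            card_biUnion_le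
        _ ≤ ∑ x ∈ F1, ∑ y ∈ G x x, ((G x y).image (fun z => ({x, y, z} : Finset ℕ))).card :=
            Finset.sum_le_sum (fun x _ => card_biUnion_le)
        _ ≤ ∑ x ∈ F1, ∑ y ∈ G x x, s := by
            refine Finset.sum_le_sum (fun x _ => Finset.sum_le_sum (fun y _ => ?_))
            calc ((G x y).image (fun z => ({x, y, z} : Finset ℕ))).card ≤ (G x y).card :=
                card_image_le
              _ = s := (hF _ (hGF x y)).2
        _ = ∑ x ∈ F1, s * s := by
            refine Finset.sum_congr rfl (fun x _ => ?_)
            rw [Finset.sum_const, smul_eq_mul, (hF _ (hGF x x)).2]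
        _ ≤ s ^ 3 := by
            rw [Finset.sum_const, smul_eq_mul, (hF F1 hF1).2]
            ring_nf
            exact le_refl _
    · intro A hA
      obtain ⟨x, hx⟩ := hint A hA F1 hF1
      simp only [mem_inter] at hx
      obtain ⟨y, hy⟩ := hint A hA _ (hGF x x)
      simp only [mem_inter] at hy
      obtain ⟨z, hz⟩ := hint A hA _ (hGF x y)
      simp only [mem_inter] at hz
      refine ⟨{x, y, z}, ?_, ?_⟩
      · simp only [hT, mem_biUnion, mem_image]
        exact ⟨x, hx.2, y, hy.2, z, hz.2, rfl⟩
      · intro w hw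
        simp only [mem_insert, mem_singleton] at hw
        rcases hw with rfl | rfl | rfl
        exacts [hx.1, hy.1, hz.1]
end

section
/- Let 3 ≤ k ≤ s and let F be an intersecting family of subsets of [n] with each member having size between k and s, such that for every pair of elements u, v ∈ [n] there is a member F ∈ F with F ∩ {u, v} = ∅. Then there exists a family T of 3-element subsets of [n] with |T| ≤ s^3 such that every member of F contains at least one member of T. -/
open Finset

theorem stmt_3 (n s k : ℕ) (hk : 3 ≤ k) (hks : k ≤ s)
    (F : Finset (Finset ℕ))
    (hF : ∀ A ∈ F, A ⊆ Finset.Icc 1 n ∧ k ≤ A.card ∧ A.card ≤ s)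
    (hint : ∀ A ∈ F, ∀ B ∈ F, A ≠ B → (A ∩ B).Nonempty)
    (hcov : ∀ u ∈ Finset.Icc 1 n, ∀ v ∈ Finset.Icc 1 n,
      ∃ G ∈ F, G ∩ ({u, v} : Finset ℕ) = ∅) :
    ∃ T : Finset (Finset ℕ),
      (∀ t ∈ T, t ⊆ Finset.Icc 1 n ∧ t.card = 3) ∧
      T.card ≤ s ^ 3 ∧
      ∀ A ∈ F, ∃ t ∈ T, t ⊆ A := by
  classical
  by_cases hFe : F = ∅
  · exact ⟨∅, by simp, by simp, by simp [hFe]⟩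
  obtain ⟨F₁, hF₁⟩ := Finset.nonempty_of_ne_empty hFe
  have hcov' : ∀ u v : ℕ, u ∈ Finset.Icc 1 n → v ∈ Finset.Icc 1 n →
      ∃ G, G ∈ F ∧ G ∩ ({u, v} : Finset ℕ) = ∅ := by
    intro u v hu hv
    obtain ⟨G, hG, hG'⟩ := hcov u hu v hv
    exact ⟨G, hG, hG'⟩
  set G3 : ℕ → ℕ → Finset ℕ := fun u v =>
    if h : u ∈ Finset.Icc 1 n ∧ v ∈ Finset.Icc 1 n then (hcov' u v h.1 h.2).choose
    else ∅ with hG3def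
  have hG3 : ∀ u v, u ∈ Finset.Icc 1 n → v ∈ Finset.Icc 1 n →
      G3 u v ∈ F ∧ G3 u v ∩ ({u, v} : Finset ℕ) = ∅ := by
    intro u v hu hv
    simp only [hG3def, dif_pos (And.intro hu hv)]
    exact (hcov' u v hu hv).choose_spec
  have hmemIcc : ∀ A ∈ F, ∀ x ∈ A, x ∈ Finset.Icc 1 n := by
    intro A hA x hx
    exact (hF A hA).1 hx
  have hnotmem : ∀ u v, u ∈ Finset.Icc 1 n → v ∈ Finset.Icc 1 n →
      u ∉ G3 u v ∧ v ∉ G3 u v := by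
    intro u v hu hv
    have h := (hG3 u v hu hv).2
    constructor
    · intro hmem
      have : u ∈ G3 u v ∩ ({u, v} : Finset ℕ) := by
        simp [Finset.mem_inter, hmem]
      simp [h] at this
    · intro hmem
      have : v ∈ G3 u v ∩ ({u, v} : Finset ℕ) := by
        simp [Finset.mem_inter, hmem]
      simp [h] at this
  refine ⟨F₁.biUnion (fun x => (G3 x x).biUnion (fun y =>
      (G3 x y).image (fun z => ({x, y, z} : Finset ℕ)))), ?_, ?_, ?_⟩
  · -- triples are subsets of Icc with card 3
    intro t ht
    simp only [Finset.mem_biUnion, Finset.mem_image] at ht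
    obtain ⟨x, hx, y, hy, z, hz, rfl⟩ := ht
    have hxI : x ∈ Finset.Icc 1 n := hmemIcc F₁ hF₁ x hx
    have hyI : y ∈ Finset.Icc 1 n := hmemIcc _ (hG3 x x hxI hxI).1 y hy
    have hzI : z ∈ Finset.Icc 1 n := hmemIcc _ (hG3 x y hxI hyI).1 z hz
    have hxy : x ≠ y := fun h => (hnotmem x x hxI hxI).1 (h ▸ hy)
    have hxz : x ≠ z := fun h => (hnotmem x y hxI hyI).1 (h ▸ hz)
    have hyz : y ≠ z := fun h => (hnotmem x y hxI hyI).2 (h ▸ hz)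
    constructor
    · intro w hw
      simp only [Finset.mem_insert, Finset.mem_singleton] at hw
      rcases hw with rfl | rfl | rfl
      · exact hxI
      · exact hyI
      · exact hzI
    · rw [Finset.card_insert_of_notMem (by simp [hxy, hxz]),
        Finset.card_insert_of_notMem (by simp [hyz]), Finset.card_singleton]
  · -- cardinality bound
    have hcards : ∀ A ∈ F, A.card ≤ s := fun A hA => (hF A hA).2.2
    calc (F₁.biUnion (fun x => (G3 x x).biUnion (fun y =>
          (G3 x y).image (fun z => ({x, y, z} : Finset ℕ))))).card
        ≤ ∑ x ∈ F₁, ((G3 x x).biUnion (fun y =>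
          (G3 x y).image (fun z => ({x, y, z} : Finset ℕ)))).card :=
          Finset.card_biUnion_le
      _ ≤ ∑ _x ∈ F₁, s * s := by
          apply Finset.sum_le_sum
          intro x hx
          have hxI : x ∈ Finset.Icc 1 n := hmemIcc F₁ hF₁ x hx
          calc ((G3 x x).biUnion (fun y =>
              (G3 x y).image (fun z => ({x, y, z} : Finset ℕ)))).card
              ≤ ∑ y ∈ G3 x x, ((G3 x y).image
                (fun z => ({x, y, z} : Finset ℕ))).card := Finset.card_biUnion_le
            _ ≤ ∑ _y ∈ G3 x x, s := by
                apply Finset.sum_le_sum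
                intro y hy
                have hyI : y ∈ Finset.Icc 1 n := hmemIcc _ (hG3 x x hxI hxI).1 y hy
                exact le_trans Finset.card_image_le (hcards _ (hG3 x y hxI hyI).1)
            _ = (G3 x x).card * s := by rw [Finset.sum_const, smul_eq_mul]
            _ ≤ s * s := Nat.mul_le_mul_right s (hcards _ (hG3 x x hxI hxI).1)
      _ = F₁.card * (s * s) := by rw [Finset.sum_const, smul_eq_mul]
      _ ≤ s * (s * s) := Nat.mul_le_mul_right _ (hcards F₁ hF₁)
      _ = s ^ 3 := by ring
  · -- coverage
    intro A hA
    have hAne : A.Nonempty := by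
      have := (hF A hA).2.1
      exact Finset.card_pos.mp (by omega)
    -- x ∈ A ∩ F₁
    obtain ⟨x, hxA, hxF₁⟩ : ∃ x, x ∈ A ∧ x ∈ F₁ := by
      by_cases h : A = F₁
      · obtain ⟨x, hx⟩ := hAne
        exact ⟨x, hx, h ▸ hx⟩
      · obtain ⟨x, hx⟩ := hint A hA F₁ hF₁ h
        rw [Finset.mem_inter] at hx
        exact ⟨x, hx.1, hx.2⟩
    have hxI : x ∈ Finset.Icc 1 n := hmemIcc A hA x hxA
    -- y ∈ A ∩ G3 x x
    have hAne2 : A ≠ G3 x x := by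
      intro h
      exact (hnotmem x x hxI hxI).1 (h ▸ hxA)
    obtain ⟨y, hy⟩ := hint A hA (G3 x x) (hG3 x x hxI hxI).1 hAne2
    rw [Finset.mem_inter] at hy
    obtain ⟨hyA, hyG⟩ := hy
    have hyI : y ∈ Finset.Icc 1 n := hmemIcc A hA y hyA
    -- z ∈ A ∩ G3 x y
    have hAne3 : A ≠ G3 x y := by
      intro h
      exact (hnotmem x y hxI hyI).1 (h ▸ hxA)
    obtain ⟨z, hz⟩ := hint A hA (G3 x y) (hG3 x y hxI hyI).1 hAne3
    rw [Finset.mem_inter] at hz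
    obtain ⟨hzA, hzG⟩ := hz
    refine ⟨{x, y, z}, ?_, ?_⟩
    · simp only [Finset.mem_biUnion, Finset.mem_image]
      exact ⟨x, hxF₁, y, hyG, z, hzG, rfl⟩
    · intro w hw
      simp only [Finset.mem_insert, Finset.mem_singleton] at hw
      rcases hw with rfl | rfl | rfl
      · exact hxA
      · exact hyA
      · exact hzA
end

section
/- Let F be a family of subsets of [n], each of size between k and s where 3 ≤ k ≤ s, such that any two distinct members A, B of F satisfy 1 ≤ |A ∩ B| ≤ k-1. Then there exists n₀ depending only on s such that for all n > n₀, |F| ≤ C(n-1, k-1). -/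
open Finset

/-- Arithmetic: for `n` large, `s² · C(n, k-2) ≤ C(n-1, k-1)`. -/
lemma stmt4_arith (s k n : ℕ) (hk : 3 ≤ k) (hks : k ≤ s)
    (hn : 2 * s + 2 ^ s * s ^ 2 * s.factorial + s + 5 < n) :
    s ^ 2 * n.choose (k - 2) ≤ (n - 1).choose (k - 1) := by
  set M := 2 ^ s * s ^ 2 * s.factorial with hMdef
  have hfacpos : 0 < (k - 1).factorial := Nat.factorial_pos _
  -- key inequality on powers
  have h1 : n ≤ 2 * (n - k + 1) := by omega
  have h2 : n ^ (k - 2) ≤ 2 ^ (k - 2) * (n - k + 1) ^ (k - 2) := by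
    calc n ^ (k - 2) ≤ (2 * (n - k + 1)) ^ (k - 2) := Nat.pow_le_pow_left h1 _
      _ = 2 ^ (k - 2) * (n - k + 1) ^ (k - 2) := Nat.mul_pow _ _ _
  have hcoef : (k - 1).factorial * (s ^ 2 * 2 ^ (k - 2)) ≤ M := by
    rw [hMdef]
    calc (k - 1).factorial * (s ^ 2 * 2 ^ (k - 2))
        ≤ s.factorial * (s ^ 2 * 2 ^ s) := by
          exact Nat.mul_le_mul (Nat.factorial_le (by omega))
            (Nat.mul_le_mul_left _ (Nat.pow_le_pow_right (by norm_num) (by omega)))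
      _ = 2 ^ s * s ^ 2 * s.factorial := by ring
  have hMn : M ≤ n - k + 1 := by omega
  have hkey : (k - 1).factorial * (s ^ 2 * n ^ (k - 2)) ≤ (n - k + 1) ^ (k - 1) := by
    have e : k - 1 = (k - 2) + 1 := by omega
    calc (k - 1).factorial * (s ^ 2 * n ^ (k - 2))
        ≤ (k - 1).factorial * (s ^ 2 * (2 ^ (k - 2) * (n - k + 1) ^ (k - 2))) := by
          exact Nat.mul_le_mul_left _ (Nat.mul_le_mul_left _ h2)
      _ = ((k - 1).factorial * (s ^ 2 * 2 ^ (k - 2))) * (n - k + 1) ^ (k - 2) := by ring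
      _ ≤ (n - k + 1) * (n - k + 1) ^ (k - 2) :=
          Nat.mul_le_mul_right _ (hcoef.trans hMn)
      _ = (n - k + 1) ^ (k - 1) := by rw [e, pow_succ]; ring
  have hdesc : (n - k + 1) ^ (k - 1) ≤ (n - 1).descFactorial (k - 1) := by
    have e : n - 1 + 1 - (k - 1) = n - k + 1 := by omega
    have := Nat.pow_sub_le_descFactorial (n - 1) (k - 1)
    rwa [e] at this
  have hchoose : n.choose (k - 2) ≤ n ^ (k - 2) := Nat.choose_le_pow _ _
  have : (k - 1).factorial * (s ^ 2 * n.choose (k - 2)) ≤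
      (k - 1).factorial * (n - 1).choose (k - 1) := by
    calc (k - 1).factorial * (s ^ 2 * n.choose (k - 2))
        ≤ (k - 1).factorial * (s ^ 2 * n ^ (k - 2)) := by
          exact Nat.mul_le_mul_left _ (Nat.mul_le_mul_left _ hchoose)
      _ ≤ (n - k + 1) ^ (k - 1) := hkey
      _ ≤ (n - 1).descFactorial (k - 1) := hdesc
      _ = (k - 1).factorial * (n - 1).choose (k - 1) :=
          Nat.descFactorial_eq_factorial_mul_choose _ _
  exact Nat.le_of_mul_le_mul_left this hfacpos

/-- Case 1: the family has a common element. -/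
lemma stmt4_common (s k n : ℕ) (hk : 3 ≤ k) (F : Finset (Finset ℕ))
    (hF : ∀ A ∈ F, A ⊆ Finset.Icc 1 n ∧ k ≤ A.card ∧ A.card ≤ s)
    (hint : ∀ A ∈ F, ∀ B ∈ F, A ≠ B →
        1 ≤ (A ∩ B).card ∧ (A ∩ B).card ≤ k - 1)
    (x : ℕ) (hx : ∀ A ∈ F, x ∈ A) :
    F.card ≤ Nat.choose (n - 1) (k - 1) := by
  classical
  rcases F.eq_empty_or_nonempty with rfl | ⟨A₁, hA₁⟩
  · simp
  have hxIcc : x ∈ Finset.Icc 1 n := (hF A₁ hA₁).1 (hx A₁ hA₁)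
  have hex : ∀ A : Finset ℕ, ∃ t : Finset ℕ,
      A ∈ F → t ⊆ A.erase x ∧ t.card = k - 1 := by
    intro A
    by_cases hA : A ∈ F
    · have hcard : k - 1 ≤ (A.erase x).card := by
        rw [Finset.card_erase_of_mem (hx A hA)]
        have := (hF A hA).2.1; omega
      obtain ⟨t, ht1, ht2⟩ := Finset.exists_subset_card_eq hcard
      exact ⟨t, fun _ => ⟨ht1, ht2⟩⟩
    · exact ⟨∅, fun h => absurd h hA⟩
  choose g hg using hex
  have hcard : (((Finset.Icc 1 n).erase x).powersetCard (k - 1)).card =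
      Nat.choose (n - 1) (k - 1) := by
    rw [Finset.card_powersetCard, Finset.card_erase_of_mem hxIcc, Nat.card_Icc]
    congr 1
  rw [← hcard]
  apply Finset.card_le_card_of_injOn g
  · intro A hA
    rw [Finset.mem_coe, Finset.mem_powersetCard]
    refine ⟨(hg A hA).1.trans (Finset.erase_subset_erase x (hF A hA).1), (hg A hA).2⟩
  · intro A hA B hB hgab
    by_contra hne
    have hAB := (hint A hA B hB hne).2
    have hxgA : x ∉ g A := fun h => Finset.notMem_erase x A ((hg A hA).1 h)
    have hsub : insert x (g A) ⊆ A ∩ B := by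
      apply Finset.subset_inter
      · exact Finset.insert_subset (hx A hA)
          ((hg A hA).1.trans (Finset.erase_subset x A))
      · rw [hgab]
        exact Finset.insert_subset (hx B hB)
          ((hg B hB).1.trans (Finset.erase_subset x B))
    have hc : k ≤ (A ∩ B).card := by
      have := Finset.card_le_card hsub
      rw [Finset.card_insert_of_notMem hxgA, (hg A hA).2] at this
      omega
    omega

theorem stmt_4 (s k : ℕ) (hk : 3 ≤ k) (hks : k ≤ s) :
    ∃ n₀ : ℕ, ∀ n : ℕ, n₀ < n → ∀ F : Finset (Finset ℕ),
      (∀ A ∈ F, A ⊆ Finset.Icc 1 n ∧ k ≤ A.card ∧ A.card ≤ s) →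
      (∀ A ∈ F, ∀ B ∈ F, A ≠ B →
        1 ≤ (A ∩ B).card ∧ (A ∩ B).card ≤ k - 1) →
      F.card ≤ Nat.choose (n - 1) (k - 1) := by
  classical
  refine ⟨2 * s + 2 ^ s * s ^ 2 * s.factorial + s + 5, fun n hn F hF hint => ?_⟩
  by_cases hcom : ∃ x, ∀ A ∈ F, x ∈ A
  · obtain ⟨x, hx⟩ := hcom
    exact stmt4_common s k n hk F hF hint x hx
  · push_neg at hcom
    rcases F.eq_empty_or_nonempty with rfl | ⟨A₀, hA₀⟩
    · simp
    choose B hBF hBx using hcom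
    -- choose for each A a witness triple
    have hex : ∀ A : Finset ℕ, ∃ p : (ℕ × ℕ) × Finset ℕ, A ∈ F →
        p.1.1 ∈ A ∧ p.1.1 ∈ A₀ ∧ p.1.2 ∈ A ∧ p.1.2 ∈ B p.1.1 ∧
        p.2 ⊆ A \ {p.1.1, p.1.2} ∧ p.2.card = k - 2 := by
      intro A
      by_cases hA : A ∈ F
      · -- find x ∈ A ∩ A₀
        have hxex : (A ∩ A₀).Nonempty := by
          by_cases hAA : A = A₀
          · subst hAA
            rw [Finset.inter_self]
            have := (hF A hA).2.1
            exact Finset.card_pos.mp (by omega)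
          · exact Finset.card_pos.mp (by have := (hint A hA A₀ hA₀ hAA).1; omega)
        obtain ⟨x, hxA⟩ := hxex
        rw [Finset.mem_inter] at hxA
        have hne : A ≠ B x := fun h => hBx x (h ▸ hxA.1)
        have hyex : (A ∩ B x).Nonempty :=
          Finset.card_pos.mp (by have := (hint A hA (B x) (hBF x) hne).1; omega)
        obtain ⟨y, hyA⟩ := hyex
        rw [Finset.mem_inter] at hyA
        have hxy : x ≠ y := fun h => hBx x (h ▸ hyA.2)
        have hsub : {x, y} ⊆ A := by
          intro z hz
          rcases Finset.mem_insert.mp hz with rfl | hz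
          · exact hxA.1
          · exact (Finset.mem_singleton.mp hz) ▸ hyA.1
        have hcard2 : ({x, y} : Finset ℕ).card = 2 := by
          rw [Finset.card_insert_of_notMem (by simpa using hxy), Finset.card_singleton]
        have hcard : k - 2 ≤ (A \ {x, y}).card := by
          rw [Finset.card_sdiff_of_subset hsub, hcard2]
          have := (hF A hA).2.1; omega
        obtain ⟨t, ht1, ht2⟩ := Finset.exists_subset_card_eq hcard
        exact ⟨((x, y), t), fun _ => ⟨hxA.1, hxA.2, hyA.1, hyA.2, ht1, ht2⟩⟩
      · exact ⟨((0, 0), ∅), fun h => absurd h hA⟩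
    choose f hf using hex
    -- target finset
    set P : Finset (ℕ × ℕ) := A₀.biUnion (fun z => {z} ×ˢ B z) with hPdef
    set Q : Finset (Finset ℕ) := (Finset.Icc 1 n).powersetCard (k - 2) with hQdef
    have hFle : F.card ≤ (P ×ˢ Q).card := by
      apply Finset.card_le_card_of_injOn f
      · intro A hA
        obtain ⟨h1, h2, h3, h4, h5, h6⟩ := hf A hA
        rw [Finset.mem_coe, Finset.mem_product]
        constructor
        · rw [hPdef, Finset.mem_biUnion]
          exact ⟨(f A).1.1, h2, by rw [Finset.mem_product]; simp [h4]⟩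
        · rw [hQdef, Finset.mem_powersetCard]
          exact ⟨(h5.trans (Finset.sdiff_subset)).trans (hF A hA).1, h6⟩
      · intro A hA A' hA' hfeq
        by_contra hne
        obtain ⟨h1, h2, h3, h4, h5, h6⟩ := hf A hA
        obtain ⟨h1', h2', h3', h4', h5', h6'⟩ := hf A' hA'
        have hAB := (hint A hA A' hA' hne).2
        set x := (f A).1.1
        set y := (f A).1.2
        set S := (f A).2
        have hxS : x ∉ S := fun h => by
          have := h5 h; rw [Finset.mem_sdiff] at this
          exact this.2 (Finset.mem_insert_self _ _)
        have hyS : y ∉ S := fun h => by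
          have := h5 h; rw [Finset.mem_sdiff] at this
          exact this.2 (Finset.mem_insert_of_mem (Finset.mem_singleton_self _))
        have hxy : x ≠ y := fun h => hBx x (h ▸ h4)
        have hsub : insert x (insert y S) ⊆ A ∩ A' := by
          apply Finset.subset_inter
          · exact Finset.insert_subset h1 (Finset.insert_subset h3
              ((h5.trans Finset.sdiff_subset)))
          · have ex : (f A').1.1 = x := by rw [← hfeq]
            have ey : (f A').1.2 = y := by rw [← hfeq]
            have eS : (f A').2 = S := by rw [← hfeq]
            rw [ex] at h1'; rw [ey] at h3'; rw [eS, ex, ey] at h5'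
            exact Finset.insert_subset h1' (Finset.insert_subset h3'
              ((h5'.trans Finset.sdiff_subset)))
        have hc : k ≤ (A ∩ A').card := by
          have hcardins : (insert x (insert y S)).card = k := by
            rw [Finset.card_insert_of_notMem (by simp [hxS, hxy]),
              Finset.card_insert_of_notMem hyS, h6]
            omega
          have := Finset.card_le_card hsub
          omega
        omega
    have hPcard : P.card ≤ s * s := by
      rw [hPdef]
      calc (A₀.biUnion (fun z => {z} ×ˢ B z)).card
          ≤ ∑ z ∈ A₀, ({z} ×ˢ B z).card := Finset.card_biUnion_le
        _ ≤ ∑ z ∈ A₀, s := by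
            apply Finset.sum_le_sum
            intro z _
            rw [Finset.card_product, Finset.card_singleton, one_mul]
            exact (hF (B z) (hBF z)).2.2
        _ = A₀.card * s := by rw [Finset.sum_const, smul_eq_mul]
        _ ≤ s * s := Nat.mul_le_mul_right s (le_trans (hF A₀ hA₀).2.2 le_rfl)
    have hQcard : Q.card = n.choose (k - 2) := by
      rw [hQdef, Finset.card_powersetCard, Nat.card_Icc]
      congr 1
    calc F.card ≤ (P ×ˢ Q).card := hFle
      _ = P.card * Q.card := Finset.card_product _ _
      _ ≤ (s * s) * n.choose (k - 2) := by
          rw [hQcard]; exact Nat.mul_le_mul_right _ hPcard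
      _ = s ^ 2 * n.choose (k - 2) := by ring
      _ ≤ Nat.choose (n - 1) (k - 1) := stmt4_arith s k n hk hks hn
end

section
/- Let 2 ≤ k and k+2 ≤ s ≤ n, and fix two distinct elements x, y ∈ [n]. If F is a family of s-element subsets of [n] such that {x, y} ⊆ F for every F ∈ F and any two distinct members A, B of F satisfy |A ∩ B| ≤ k, then |F| * C(s-2, k-1) ≤ C(n-2, k-1). -/
open Finset

theorem stmt_6 (n s k : ℕ) (hk : 2 ≤ k) (hs : k + 2 ≤ s) (hsn : s ≤ n)
    (x y : ℕ) (hx : x ∈ Finset.Icc 1 n) (hy : y ∈ Finset.Icc 1 n) (hxy : x ≠ y)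
    (F : Finset (Finset ℕ))
    (hF : ∀ A ∈ F, A ⊆ Finset.Icc 1 n ∧ A.card = s ∧ x ∈ A ∧ y ∈ A)
    (hint : ∀ A ∈ F, ∀ B ∈ F, A ≠ B → (A ∩ B).card ≤ k) :
    F.card * Nat.choose (s - 2) (k - 1) ≤ Nat.choose (n - 2) (k - 1) := by
  classical
  have key : ∀ A ∈ F, (A \ {x, y}).card = s - 2 := by
    intro A hA
    obtain ⟨hsub, hcard, hxA, hyA⟩ := hF A hA
    have hxyA : ({x, y} : Finset ℕ) ⊆ A := by
      intro z hz; simp at hz; rcases hz with rfl | rfl <;> assumption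
    rw [card_sdiff_of_subset hxyA, hcard, card_pair hxy]
  have hdisj : (F : Set (Finset ℕ)).PairwiseDisjoint
      (fun A => (A \ {x, y}).powersetCard (k - 1)) := by
    intro A hA B hB hAB
    simp only [Function.onFun, Finset.disjoint_left]
    intro S hSA hSB
    simp only [mem_powersetCard] at hSA hSB
    have hxS : x ∉ S := fun h => (mem_sdiff.1 (hSA.1 h)).2 (by simp)
    have hyS : y ∉ S := fun h => (mem_sdiff.1 (hSA.1 h)).2 (by simp)
    obtain ⟨_, _, hxA, hyA⟩ := hF A hA
    obtain ⟨_, _, hxB, hyB⟩ := hF B hB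
    have hsub : insert x (insert y S) ⊆ A ∩ B := by
      intro z hz
      simp only [mem_insert] at hz
      rcases hz with rfl | rfl | hz
      · exact mem_inter.2 ⟨hxA, hxB⟩
      · exact mem_inter.2 ⟨hyA, hyB⟩
      · exact mem_inter.2 ⟨(mem_sdiff.1 (hSA.1 hz)).1, (mem_sdiff.1 (hSB.1 hz)).1⟩
    have hcard : (insert x (insert y S)).card = k + 1 := by
      rw [card_insert_of_notMem (by simp [hxy, hxS]),
        card_insert_of_notMem hyS, hSA.2]
      omega
    have h1 := card_le_card hsub
    have h2 := hint A hA B hB hAB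
    omega
  have hsum : F.card * Nat.choose (s - 2) (k - 1)
      = (F.biUnion (fun A => (A \ {x, y}).powersetCard (k - 1))).card := by
    rw [card_biUnion (fun A hA B hB h => hdisj hA hB h)]
    rw [Finset.sum_congr rfl (fun A hA => by rw [card_powersetCard, key A hA])]
    rw [Finset.sum_const, smul_eq_mul]
  rw [hsum]
  have hss : F.biUnion (fun A => (A \ {x, y}).powersetCard (k - 1))
      ⊆ ((Finset.Icc 1 n) \ {x, y}).powersetCard (k - 1) := by
    intro S hS
    simp only [mem_biUnion, mem_powersetCard] at hS ⊢
    obtain ⟨A, hA, hSA, hSc⟩ := hS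
    exact ⟨hSA.trans (sdiff_subset_sdiff (hF A hA).1 le_rfl), hSc⟩
  calc _ ≤ _ := card_le_card hss
    _ = _ := by
      have hxyn : ({x, y} : Finset ℕ) ⊆ Finset.Icc 1 n := by
        intro z hz; simp at hz; rcases hz with rfl | rfl <;> assumption
      rw [card_powersetCard, card_sdiff_of_subset hxyn, Nat.card_Icc, card_pair hxy]; norm_num
end

section
/- Let 3 ≤ k ≤ s ≤ n and fix two distinct elements x, y ∈ [n]. If F is a family of subsets of [n], each of size between k and s, such that {x, y} ⊆ F for every F ∈ F and any two distinct members A, B satisfy |A ∩ B| ≤ k-1, then |F| ≤ C(n-2, k-2). -/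
open Finset

theorem stmt_7 (n s k : ℕ) (hk : 3 ≤ k) (hks : k ≤ s) (hsn : s ≤ n)
    (x y : ℕ) (hx : x ∈ Finset.Icc 1 n) (hy : y ∈ Finset.Icc 1 n) (hxy : x ≠ y)
    (F : Finset (Finset ℕ))
    (hF : ∀ A ∈ F, A ⊆ Finset.Icc 1 n ∧ k ≤ A.card ∧ A.card ≤ s ∧ x ∈ A ∧ y ∈ A)
    (hint : ∀ A ∈ F, ∀ B ∈ F, A ≠ B → (A ∩ B).card ≤ k - 1) :
    F.card ≤ Nat.choose (n - 2) (k - 2) := by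
  classical
  set T : Finset ℕ := Finset.Icc 1 n \ {x, y} with hT
  have hpair : ({x, y} : Finset ℕ).card = 2 := by
    rw [Finset.card_insert_of_notMem (by simp [hxy]), Finset.card_singleton]
  have hTcard : T.card = n - 2 := by
    rw [hT, Finset.card_sdiff_of_subset (by
      intro z hz; simp only [Finset.mem_insert, Finset.mem_singleton] at hz
      rcases hz with rfl | rfl <;> assumption), hpair, Nat.card_Icc]
    omega
  have key : ∀ A ∈ F, k - 2 ≤ (A \ {x, y}).card := by
    intro A hA
    obtain ⟨hsub, hkA, _, hxA, hyA⟩ := hF A hA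
    have hpairsub : ({x, y} : Finset ℕ) ⊆ A := by
      intro z hz; simp only [Finset.mem_insert, Finset.mem_singleton] at hz
      rcases hz with rfl | rfl <;> assumption
    rw [Finset.card_sdiff_of_subset hpairsub, hpair]
    omega
  let f : Finset ℕ → Finset ℕ := fun A =>
    if h : k - 2 ≤ (A \ {x, y}).card then (Finset.exists_subset_card_eq h).choose else ∅
  have hf : ∀ A ∈ F, f A ⊆ A \ {x, y} ∧ (f A).card = k - 2 := by
    intro A hA
    have h := key A hA
    simp only [f, dif_pos h]
    exact (Finset.exists_subset_card_eq h).choose_spec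
  have hmap : ∀ A ∈ F, f A ∈ Finset.powersetCard (k - 2) T := by
    intro A hA
    obtain ⟨hs, hc⟩ := hf A hA
    rw [Finset.mem_powersetCard]
    refine ⟨?_, hc⟩
    intro z hz
    have hz' := hs hz
    rw [Finset.mem_sdiff] at hz'
    rw [hT, Finset.mem_sdiff]
    exact ⟨(hF A hA).1 hz'.1, hz'.2⟩
  have hinj : ∀ A ∈ F, ∀ B ∈ F, f A = f B → A = B := by
    intro A hA B hB hfab
    by_contra hne
    have hAB := hint A hA B hB hne
    obtain ⟨hsA, hcA⟩ := hf A hA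
    obtain ⟨hsB, _⟩ := hf B hB
    rw [← hfab] at hsB
    have hdisj : Disjoint (f A) ({x, y} : Finset ℕ) := by
      rw [Finset.disjoint_right]
      intro z hz hz'
      exact (Finset.mem_sdiff.mp (hsA hz')).2 hz
    have hsub : f A ∪ {x, y} ⊆ A ∩ B := by
      intro z hz
      rcases Finset.mem_union.mp hz with hz | hz
      · exact Finset.mem_inter.mpr ⟨(Finset.mem_sdiff.mp (hsA hz)).1,
          (Finset.mem_sdiff.mp (hsB hz)).1⟩
      · simp only [Finset.mem_insert, Finset.mem_singleton] at hz
        obtain ⟨_, _, _, hxA, hyA⟩ := hF A hA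
        obtain ⟨_, _, _, hxB, hyB⟩ := hF B hB
        rcases hz with rfl | rfl <;> exact Finset.mem_inter.mpr (by constructor <;> assumption)
    have hcard : (f A ∪ ({x, y} : Finset ℕ)).card = k := by
      rw [Finset.card_union_of_disjoint hdisj, hcA, hpair]
      omega
    have := Finset.card_le_card hsub
    omega
  calc F.card ≤ (Finset.powersetCard (k - 2) T).card :=
        Finset.card_le_card_of_injOn f hmap hinj
    _ = Nat.choose (n - 2) (k - 2) := by rw [Finset.card_powersetCard, hTcard]
end

section
/- Let F be an intersecting family of subsets of [n], each of size at most s, such that any two distinct members A, B of F satisfy |A ∩ B| ≤ k-1, where 3 ≤ k ≤ s. Then for sufficiently large n (depending on s), |F| ≤ Σ_{i=0}^{k-1} C(n-1, i). -/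
open Finset

lemma df_bound (F : Finset (Finset ℕ)) (G : Finset ℕ) (l : ℕ)
    (hG : ∀ A ∈ F, A ⊆ G)
    (hint : ∀ A ∈ F, ∀ B ∈ F, A ≠ B → (A ∩ B).card < l) :
    F.card ≤ ∑ i ∈ Finset.range (l + 1), Nat.choose G.card i := by
  classical
  have hTcard : ((Finset.range (l + 1)).biUnion (fun i => G.powersetCard i)).card
      = ∑ i ∈ Finset.range (l + 1), Nat.choose G.card i := by
    rw [Finset.card_biUnion]
    · exact Finset.sum_congr rfl fun i _ => Finset.card_powersetCard i G
    · intro i _ j _ hij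
      simp only [Finset.disjoint_left, Finset.mem_powersetCard]
      rintro a ⟨-, ha⟩ ⟨-, hb⟩
      exact hij (ha ▸ hb ▸ rfl)
  rw [← hTcard]
  have hch : ∀ A : Finset ℕ, ¬ A.card ≤ l → ∃ t ⊆ A, t.card = l :=
    fun A h => Finset.exists_subset_card_eq (le_of_lt (not_le.mp h))
  let f : Finset ℕ → Finset ℕ := fun A => if h : A.card ≤ l then A else (hch A h).choose
  have hfpos : ∀ A (h : A.card ≤ l), f A = A := fun A h => dif_pos h
  have hfneg : ∀ A (h : ¬ A.card ≤ l), f A = (hch A h).choose := fun A h => dif_neg h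
  have hsub : ∀ A, f A ⊆ A := by
    intro A
    by_cases h : A.card ≤ l
    · rw [hfpos A h]
    · rw [hfneg A h]; exact (hch A h).choose_spec.1
  have hcardle : ∀ A, (f A).card ≤ l := by
    intro A
    by_cases h : A.card ≤ l
    · rw [hfpos A h]; exact h
    · rw [hfneg A h]; exact le_of_eq (hch A h).choose_spec.2
  have hcardeq : ∀ A, ¬ A.card ≤ l → (f A).card = l := by
    intro A h
    rw [hfneg A h]; exact (hch A h).choose_spec.2
  apply Finset.card_le_card_of_injOn f
  · intro A hA
    simp only [Finset.mem_coe, Finset.mem_biUnion, Finset.mem_range, Finset.mem_powersetCard]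
    exact ⟨(f A).card, Nat.lt_succ_of_le (hcardle A), (hsub A).trans (hG A hA), rfl⟩
  · intro A hA B hB hfe0
    have hfe : f A = f B := hfe0
    by_contra hne
    have hlt := hint A hA B hB hne
    by_cases hA' : A.card ≤ l <;> by_cases hB' : B.card ≤ l
    · rw [hfpos A hA', hfpos B hB'] at hfe
      exact hne hfe
    · rw [hfpos A hA'] at hfe
      have h2 : A ⊆ A ∩ B := Finset.subset_inter (Finset.Subset.refl A) (hfe ▸ hsub B)
      have h3 : A.card ≤ (A ∩ B).card := Finset.card_le_card h2
      have h4 : A.card = l := by rw [hfe]; exact hcardeq B hB'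
      omega
    · rw [hfpos B hB'] at hfe
      have h2 : B ⊆ A ∩ B := Finset.subset_inter (hfe ▸ hsub A) (Finset.Subset.refl B)
      have h3 : B.card ≤ (A ∩ B).card := Finset.card_le_card h2
      have h4 : B.card = l := by rw [← hfe]; exact hcardeq A hA'
      omega
    · have h2 : f A ⊆ A ∩ B := Finset.subset_inter (hsub A) (hfe ▸ hsub B)
      have h3 : (f A).card ≤ (A ∩ B).card := Finset.card_le_card h2
      have h4 := hcardeq A hA'
      omega

open Finset

lemma num_bound (s k n : ℕ) (hk : 3 ≤ k) (hks : k ≤ s)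
    (hn : 2^k * Nat.factorial k * ((s + s*s)^2 * k) + 2*k + 2 < n) :
    (s + s*s)^2 * ((k-1) * n^(k-2)) ≤ (n-1).choose (k-1) := by
  set m := k - 1 with hm
  set c := (s + s*s)^2 * (k-1) with hc
  have hm2 : 2 ≤ m := by omega
  have hn1 : 2 * m < n := by omega
  have h1 : (n - m)^m ≤ Nat.factorial m * (n-1).choose m := by
    have h := Nat.pow_sub_le_descFactorial (n-1) m
    rw [Nat.descFactorial_eq_factorial_mul_choose] at h
    have he : n - 1 + 1 - m = n - m := by omega
    rwa [he] at h
  have h2 : n ^ m ≤ 2^m * (n - m)^m := by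
    have hle : n ≤ 2 * (n - m) := by omega
    calc n ^ m ≤ (2 * (n - m)) ^ m := Nat.pow_le_pow_left hle m
      _ = 2^m * (n - m)^m := mul_pow 2 (n - m) m
  have hkey : 2^m * Nat.factorial m * c ≤ n := by
    have e1 : 2^m ≤ 2^k := Nat.pow_le_pow_right (by norm_num) (by omega)
    have e2 : Nat.factorial m ≤ Nat.factorial k := Nat.factorial_le (by omega)
    have e3 : c ≤ (s + s*s)^2 * k := Nat.mul_le_mul_left _ (by omega)
    calc 2^m * Nat.factorial m * c ≤ 2^k * Nat.factorial k * ((s + s*s)^2 * k) :=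
          Nat.mul_le_mul (Nat.mul_le_mul e1 e2) e3
      _ ≤ n := by omega
  have h3 : 2^m * (Nat.factorial m * (c * n^(m-1))) ≤ n ^ m := by
    have e : n ^ m = n * n^(m-1) := by
      rw [← pow_succ']
      congr 1
      omega
    calc 2^m * (Nat.factorial m * (c * n^(m-1)))
        = (2^m * Nat.factorial m * c) * n^(m-1) := by ring
      _ ≤ n * n^(m-1) := Nat.mul_le_mul_right _ hkey
      _ = n ^ m := e.symm
  have h4 : Nat.factorial m * (c * n^(m-1)) ≤ (n - m)^m :=
    Nat.le_of_mul_le_mul_left (h3.trans h2) (pow_pos (by norm_num) m)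
  have h5 : Nat.factorial m * (c * n^(m-1)) ≤ Nat.factorial m * (n-1).choose m :=
    h4.trans h1
  have h6 : c * n^(m-1) ≤ (n-1).choose m :=
    Nat.le_of_mul_le_mul_left h5 (Nat.factorial_pos m)
  calc (s + s*s)^2 * ((k-1) * n^(k-2)) = c * n^(m-1) := by
        have e2 : k - 2 = m - 1 := by omega
        rw [e2, hc, mul_assoc]
    _ ≤ (n-1).choose m := h6

theorem stmt_8 (s k : ℕ) (hk : 3 ≤ k) (hks : k ≤ s) :
    ∃ n₀ : ℕ, ∀ n : ℕ, n₀ < n → ∀ F : Finset (Finset ℕ),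
      (∀ A ∈ F, A ⊆ Finset.Icc 1 n ∧ 1 ≤ A.card ∧ A.card ≤ s) →
      (∀ A ∈ F, ∀ B ∈ F, A ≠ B → (A ∩ B).Nonempty ∧ (A ∩ B).card ≤ k - 1) →
      F.card ≤ ∑ i ∈ Finset.range k, Nat.choose (n - 1) i := by
  classical
  refine ⟨2^k * Nat.factorial k * ((s + s*s)^2 * k) + 2*k + 2, fun n hn F hF hFint => ?_⟩
  rcases F.eq_empty_or_nonempty with hFe | ⟨A₀, hA₀⟩
  · simp [hFe]
  by_cases hcom : ∃ x, ∀ B ∈ F, x ∈ B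
  -- Case 1 : common element
  · obtain ⟨x, hx⟩ := hcom
    have hxI : x ∈ Finset.Icc 1 n := (hF A₀ hA₀).1 (hx A₀ hA₀)
    have hgc : ((Finset.Icc 1 n).erase x).card = n - 1 := by
      rw [Finset.card_erase_of_mem hxI, Nat.card_Icc]
      omega
    have hinj : Set.InjOn (fun B => Finset.erase B x) F := by
      intro B hB B' hB' he
      have he' : B.erase x = B'.erase x := he
      have : insert x (B.erase x) = insert x (B'.erase x) := by rw [he']
      rwa [Finset.insert_erase (hx B hB), Finset.insert_erase (hx B' hB')] at this
    have hcard : (F.image (fun B => Finset.erase B x)).card = F.card :=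
      Finset.card_image_of_injOn hinj
    have hdf := df_bound (F.image (fun B => Finset.erase B x)) ((Finset.Icc 1 n).erase x)
      (k - 1) ?_ ?_
    · rw [hcard, hgc] at hdf
      have : k - 1 + 1 = k := by omega
      rwa [this] at hdf
    · intro A hA
      obtain ⟨B, hB, rfl⟩ := Finset.mem_image.mp hA
      exact Finset.erase_subset_erase x (hF B hB).1
    · intro A hA A' hA' hne
      obtain ⟨B, hB, rfl⟩ := Finset.mem_image.mp hA
      obtain ⟨B', hB', rfl⟩ := Finset.mem_image.mp hA'
      have hBne : B ≠ B' := fun h => hne (by rw [h])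
      have hint := (hFint B hB B' hB' hBne).2
      have he : B.erase x ∩ B'.erase x = (B ∩ B').erase x := by
        ext a
        simp only [Finset.mem_inter, Finset.mem_erase]
        tauto
      have hxm : x ∈ B ∩ B' := Finset.mem_inter.mpr ⟨hx B hB, hx B' hB'⟩
      rw [he, Finset.card_erase_of_mem hxm]
      omega
  -- Case 2 : no common element
  · push_neg at hcom
    choose C hC1 hC2 using hcom
    set S : Finset ℕ := A₀ ∪ A₀.biUnion (fun x => C x) with hS
    have hScard : S.card ≤ s + s * s := by
      have h1 : (A₀.biUnion (fun x => C x)).card ≤ ∑ x ∈ A₀, (C x).card :=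
        Finset.card_biUnion_le
      have h2 : ∑ x ∈ A₀, (C x).card ≤ ∑ _x ∈ A₀, s :=
        Finset.sum_le_sum (fun x _ => (hF (C x) (hC1 x)).2.2)
      have h3 : ∑ _x ∈ A₀, s = A₀.card * s := by rw [Finset.sum_const, smul_eq_mul]
      have h4 : A₀.card * s ≤ s * s := Nat.mul_le_mul_right s (hF A₀ hA₀).2.2
      calc S.card ≤ A₀.card + (A₀.biUnion (fun x => C x)).card := Finset.card_union_le _ _
        _ ≤ s + s * s := by
            have := (hF A₀ hA₀).2.2
            omega
    have key : ∀ B ∈ F, ∃ p ∈ S.powersetCard 2, p ⊆ B := by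
      intro B hB
      have hBA : (B ∩ A₀).Nonempty := by
        by_cases hBe : B = A₀
        · rw [hBe, Finset.inter_self]
          exact Finset.card_pos.mp (by have := (hF A₀ hA₀).2.1; omega)
        · exact (hFint B hB A₀ hA₀ hBe).1
      obtain ⟨x, hxm⟩ := hBA
      have hxB : x ∈ B := (Finset.mem_inter.mp hxm).1
      have hxA : x ∈ A₀ := (Finset.mem_inter.mp hxm).2
      have hBC : B ≠ C x := fun h => hC2 x (h ▸ hxB)
      obtain ⟨y, hym⟩ := (hFint B hB (C x) (hC1 x) hBC).1
      have hyB : y ∈ B := (Finset.mem_inter.mp hym).1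
      have hyC : y ∈ C x := (Finset.mem_inter.mp hym).2
      have hxy : x ≠ y := fun h => hC2 x (h ▸ hyC)
      refine ⟨{x, y}, Finset.mem_powersetCard.mpr ⟨?_, Finset.card_pair hxy⟩, ?_⟩
      · intro a ha
        rcases Finset.mem_insert.mp ha with rfl | ha
        · exact Finset.mem_union_left _ hxA
        · rw [Finset.mem_singleton] at ha
          subst ha
          exact Finset.mem_union_right _ (Finset.mem_biUnion.mpr ⟨x, hxA, hyC⟩)
      · intro a ha
        rcases Finset.mem_insert.mp ha with rfl | ha
        · exact hxB
        · rw [Finset.mem_singleton] at ha; subst ha; exact hyB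
    -- F is covered by the filters
    have hcover : F ⊆ (S.powersetCard 2).biUnion
        (fun p => F.filter (fun B => p ⊆ B)) := by
      intro B hB
      obtain ⟨p, hp, hpB⟩ := key B hB
      exact Finset.mem_biUnion.mpr ⟨p, hp, Finset.mem_filter.mpr ⟨hB, hpB⟩⟩
    have hn1 : 1 ≤ n := by omega
    -- bound each filter
    have hfilter : ∀ p ∈ S.powersetCard 2,
        (F.filter (fun B => p ⊆ B)).card ≤ (k-1) * n^(k-2) := by
      intro p hp
      have hp2 : p.card = 2 := (Finset.mem_powersetCard.mp hp).2
      set Fp := F.filter (fun B => p ⊆ B) with hFp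
      have hinj : Set.InjOn (fun B => B \ p) Fp := by
        intro B hB B' hB' he
        have hpB : p ⊆ B := (Finset.mem_filter.mp hB).2
        have hpB' : p ⊆ B' := (Finset.mem_filter.mp hB').2
        have he' : B \ p = B' \ p := he
        have : B \ p ∪ p = B' \ p ∪ p := by rw [he']
        rwa [Finset.sdiff_union_of_subset hpB, Finset.sdiff_union_of_subset hpB'] at this
      have hcard : (Fp.image (fun B => B \ p)).card = Fp.card :=
        Finset.card_image_of_injOn hinj
      have hdf := df_bound (Fp.image (fun B => B \ p)) (Finset.Icc 1 n) (k - 2) ?_ ?_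
      · rw [hcard] at hdf
        have hIc : (Finset.Icc 1 n).card = n := by rw [Nat.card_Icc]; omega
        rw [hIc] at hdf
        refine hdf.trans ?_
        have hterm : ∀ i ∈ Finset.range (k - 2 + 1), Nat.choose n i ≤ n^(k-2) := by
          intro i hi
          have hi' : i ≤ k - 2 := by have := Finset.mem_range.mp hi; omega
          exact (Nat.choose_le_pow n i).trans (Nat.pow_le_pow_right hn1 hi')
        calc ∑ i ∈ Finset.range (k - 2 + 1), Nat.choose n i
            ≤ ∑ _i ∈ Finset.range (k - 2 + 1), n^(k-2) := Finset.sum_le_sum hterm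
          _ = (k - 2 + 1) * n^(k-2) := by rw [Finset.sum_const, Finset.card_range, smul_eq_mul]
          _ = (k-1) * n^(k-2) := by congr 1; omega
      · intro A hA
        obtain ⟨B, hB, rfl⟩ := Finset.mem_image.mp hA
        exact (Finset.sdiff_subset).trans (hF B (Finset.mem_filter.mp hB).1).1
      · intro A hA A' hA' hne
        obtain ⟨B, hB, rfl⟩ := Finset.mem_image.mp hA
        obtain ⟨B', hB', rfl⟩ := Finset.mem_image.mp hA'
        have hBne : B ≠ B' := fun h => hne (by rw [h])
        have hpB : p ⊆ B := (Finset.mem_filter.mp hB).2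
        have hpB' : p ⊆ B' := (Finset.mem_filter.mp hB').2
        have hint := (hFint B (Finset.mem_filter.mp hB).1 B' (Finset.mem_filter.mp hB').1 hBne).2
        have he : B \ p ∩ (B' \ p) = (B ∩ B') \ p := by
          ext a
          simp only [Finset.mem_inter, Finset.mem_sdiff]
          tauto
        have hpBB : p ⊆ B ∩ B' := Finset.subset_inter hpB hpB'
        rw [he, Finset.card_sdiff_of_subset hpBB, hp2]
        have := Finset.card_le_card hpBB
        omega
    -- combine
    have hcount : F.card ≤ (s + s*s)^2 * ((k-1) * n^(k-2)) := by
      calc F.card ≤ ((S.powersetCard 2).biUnion (fun p => F.filter (fun B => p ⊆ B))).card :=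
            Finset.card_le_card hcover
        _ ≤ ∑ p ∈ S.powersetCard 2, (F.filter (fun B => p ⊆ B)).card :=
            Finset.card_biUnion_le
        _ ≤ ∑ _p ∈ S.powersetCard 2, (k-1) * n^(k-2) := Finset.sum_le_sum hfilter
        _ = (S.powersetCard 2).card * ((k-1) * n^(k-2)) := by
            rw [Finset.sum_const, smul_eq_mul]
        _ ≤ (s + s*s)^2 * ((k-1) * n^(k-2)) := by
            apply Nat.mul_le_mul_right
            rw [Finset.card_powersetCard]
            calc Nat.choose S.card 2 ≤ S.card ^ 2 := Nat.choose_le_pow S.card 2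
              _ ≤ (s + s*s)^2 := Nat.pow_le_pow_left hScard 2
    have hnum := num_bound s k n hk hks hn
    have hsum : Nat.choose (n-1) (k-1) ≤ ∑ i ∈ Finset.range k, Nat.choose (n - 1) i :=
      Finset.single_le_sum (f := fun i => Nat.choose (n-1) i) (fun i _ => Nat.zero_le _)
        (Finset.mem_range.mpr (by omega))
    exact hcount.trans (hnum.trans hsum)
end
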